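/- arXiv:2103.13062 — 2 statements merged into one kernel-verified Lean document; each statement's English description precedes it below -/
import Mathlib

section
/- Let S be a Cu-semigroup, and let T ⊆ S be a submonoid such that every element of T is the supremum of a ≪-increasing sequence of elements of T. Then T' equals the sup-closure of T, and T' is a sub-Cu-semigroup of S. -/
def WayBelow {S : Type*} [PartialOrder S] (x y : S) : Prop :=
  ∀ f : ℕ → S, Monotone f → ∀ z : S, IsLUB (Set.range f) z → y ≤ z → ∃ n, x ≤ f n

class CuSemigroup (S : Type*) [AddCommMonoid S] [PartialOrder S] : Prop where
  zero_le : ∀ x : S, 0 ≤ x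
  add_le_add_left : ∀ x y : S, x ≤ y → ∀ z : S, z + x ≤ z + y
  exists_sup : ∀ f : ℕ → S, Monotone f → ∃ z : S, IsLUB (Set.range f) z
  exists_wb_seq : ∀ x : S, ∃ f : ℕ → S, (∀ n, WayBelow (f n) (f (n + 1))) ∧ IsLUB (Set.range f) x
  wb_add : ∀ x' x y' y : S, WayBelow x' x → WayBelow y' y → WayBelow (x' + y') (x + y)
  sup_add : ∀ f g : ℕ → S, Monotone f → Monotone g → ∀ a b : S,
    IsLUB (Set.range f) a → IsLUB (Set.range g) b →
    IsLUB (Set.range fun n => f n + g n) (a + b)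

def cuDerivedSet {S : Type*} [PartialOrder S] (T : Set S) : Set S :=
  { s | ∃ f : ℕ → S, (∀ n, f n ∈ T) ∧ (∀ n, WayBelow (f n) (f (n + 1))) ∧ IsLUB (Set.range f) s }

def SupClosedSet {S : Type*} [PartialOrder S] (T : Set S) : Prop :=
  ∀ f : ℕ → S, Monotone f → (∀ n, f n ∈ T) → ∀ z : S, IsLUB (Set.range f) z → z ∈ T

def IsSubCu {S : Type*} [AddCommMonoid S] [PartialOrder S] (T : AddSubmonoid S) : Prop :=
  CuSemigroup T ∧
  (∀ f : ℕ → T, Monotone f → ∀ z : T, IsLUB (Set.range f) z →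
    IsLUB (Set.range fun n => (f n : S)) (z : S)) ∧
  (∀ x y : T, WayBelow x y → WayBelow (x : S) (y : S))

def cuSupClosure {S : Type*} [PartialOrder S] (T : Set S) : Set S :=
  ⋂₀ { U : Set S | T ⊆ U ∧ SupClosedSet U }

/-! ### Auxiliary lemmas -/

lemma wayBelow_le {S : Type*} [PartialOrder S] {x y : S} (hxy : WayBelow x y) : x ≤ y := by
  obtain ⟨n, hn⟩ := hxy (fun _ => y) monotone_const y
    (by rw [Set.range_const]; exact isLUB_singleton) le_rfl
  exact hn

lemma le_wayBelow_le {S : Type*} [PartialOrder S] {a x y b : S}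
    (ha : a ≤ x) (hxy : WayBelow x y) (hb : y ≤ b) : WayBelow a b :=
  fun f hf z hz hbz => (hxy f hf z hz (hb.trans hbz)).imp fun _ hn => ha.trans hn

/-- The diagonal argument: the derived set is closed under suprema of increasing sequences. -/
lemma derivedSet_supClosed {S : Type*} [PartialOrder S] (T : Set S) :
    SupClosedSet (cuDerivedSet T) := by
  intro g hg hgT z hz
  simp only [cuDerivedSet, Set.mem_setOf_eq] at hgT
  choose c hcT hcwb hclub using hgT
  have rowmono : ∀ k, Monotone (c k) :=
    fun k => monotone_nat_of_le_succ fun n => wayBelow_le (hcwb k n)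
  have rowle : ∀ k n, c k n ≤ g k := fun k n => (hclub k).1 ⟨n, rfl⟩
  have find : ∀ j x y, WayBelow x y → y ≤ g j → ∃ m, x ≤ c j m :=
    fun j x y hxy hyg => hxy (c j) (rowmono j) (g j) (hclub j) hyg
  have hdiag : ∀ j p, ∃ m', c j p ≤ c (j + 1) m' :=
    fun j p => find (j + 1) _ _ (hcwb j p) ((rowle j (p + 1)).trans (hg (Nat.le_succ j)))
  have hcross : ∀ j k, ∃ m', k ≤ j → c k j ≤ c (j + 1) m' := by
    intro j k
    by_cases hk : k ≤ j
    · obtain ⟨m', hm'⟩ := find (j + 1) _ _ (hcwb k j)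
        ((rowle k (j + 1)).trans (hg (hk.trans (Nat.le_succ j))))
      exact ⟨m', fun _ => hm'⟩
    · exact ⟨0, fun hkj => absurd hkj hk⟩
  choose ψ hψ using hdiag
  choose φ hφ using hcross
  let m : ℕ → ℕ := fun j => Nat.rec 0
    (fun j mj => max (ψ j (mj + 1)) ((Finset.range (j + 1)).sup (φ j))) j
  have hm_succ : ∀ j, m (j + 1) = max (ψ j (m j + 1)) ((Finset.range (j + 1)).sup (φ j)) :=
    fun j => rfl
  refine ⟨fun j => c j (m j), fun j => hcT j (m j), ?_, ?_, ?_⟩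
  · -- way-below increasing
    intro j
    refine le_wayBelow_le le_rfl (hcwb j (m j)) ?_
    calc c j (m j + 1) ≤ c (j + 1) (ψ j (m j + 1)) := hψ j (m j + 1)
      _ ≤ c (j + 1) (m (j + 1)) := rowmono (j + 1) (by rw [hm_succ]; exact le_max_left _ _)
  · -- upper bound
    rintro _ ⟨j, rfl⟩
    exact (rowle j (m j)).trans (hz.1 ⟨j, rfl⟩)
  · -- least
    intro u hu
    refine hz.2 ?_
    rintro _ ⟨k, rfl⟩
    refine (hclub k).2 ?_
    rintro _ ⟨n, rfl⟩
    have hkj : k ≤ max k n := le_max_left k n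
    have h1 : c k n ≤ c k (max k n) := rowmono k (le_max_right k n)
    have h2 : c k (max k n) ≤ c (max k n + 1) (φ (max k n) k) := hφ (max k n) k hkj
    have h3 : φ (max k n) k ≤ m (max k n + 1) := by
      rw [hm_succ]
      exact le_trans (Finset.le_sup (Finset.mem_range.mpr (Nat.lt_succ_of_le hkj)))
        (le_max_right _ _)
    exact h1.trans (h2.trans ((rowmono _ h3).trans (hu ⟨max k n + 1, rfl⟩)))

theorem derivedSet_eq_supClosure_isSubCu {S : Type*} [AddCommMonoid S] [PartialOrder S]
    [CuSemigroup S] (T : AddSubmonoid S)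
    (h : (T : Set S) ⊆ cuDerivedSet (T : Set S)) :
    cuDerivedSet (T : Set S) = cuSupClosure (T : Set S) ∧
    ∃ D : AddSubmonoid S, (D : Set S) = cuDerivedSet (T : Set S) ∧ IsSubCu D := by
  have addle : ∀ a b cc d : S, a ≤ b → cc ≤ d → a + cc ≤ b + d := by
    intro a b cc d h1 h2
    calc a + cc ≤ a + d := CuSemigroup.add_le_add_left _ _ h2 a
      _ = d + a := add_comm _ _
      _ ≤ d + b := CuSemigroup.add_le_add_left _ _ h1 d
      _ = b + d := add_comm _ _
  constructor
  · -- derived set = sup closure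
    apply le_antisymm
    · intro z hz
      obtain ⟨f, hfT, hfwb, hflub⟩ := hz
      intro U hU
      obtain ⟨hTU, hUclosed⟩ := hU
      exact hUclosed f (monotone_nat_of_le_succ fun n => wayBelow_le (hfwb n))
        (fun n => hTU (hfT n)) z hflub
    · exact Set.sInter_subset_of_mem ⟨h, derivedSet_supClosed (T : Set S)⟩
  · -- the submonoid
    have hadd : ∀ {x y : S}, x ∈ cuDerivedSet (T : Set S) → y ∈ cuDerivedSet (T : Set S) →
        x + y ∈ cuDerivedSet (T : Set S) := by
      rintro x y ⟨f, hfT, hfwb, hflub⟩ ⟨g, hgT, hgwb, hglub⟩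
      exact ⟨fun n => f n + g n, fun n => T.add_mem (hfT n) (hgT n),
        fun n => CuSemigroup.wb_add _ _ _ _ (hfwb n) (hgwb n),
        CuSemigroup.sup_add f g
          (monotone_nat_of_le_succ fun n => wayBelow_le (hfwb n))
          (monotone_nat_of_le_succ fun n => wayBelow_le (hgwb n)) x y hflub hglub⟩
    set D : AddSubmonoid S :=
      ⟨⟨cuDerivedSet (T : Set S), fun {a b} ha hb => hadd ha hb⟩, h T.zero_mem⟩ with hD
    refine ⟨D, rfl, ?_⟩
    -- lift an S-lub of a sequence in D to a D-lub
    have lub_lift : ∀ (f : ℕ → D) (w : D),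
        IsLUB (Set.range fun n => (f n : S)) (w : S) → IsLUB (Set.range f) w := by
      intro f w hw
      constructor
      · rintro _ ⟨n, rfl⟩
        exact Subtype.coe_le_coe.mp (hw.1 ⟨n, rfl⟩)
      · intro u hu
        refine Subtype.coe_le_coe.mp (hw.2 ?_)
        rintro _ ⟨n, rfl⟩
        exact Subtype.coe_le_coe.mpr (hu ⟨n, rfl⟩)
    have lub_exists : ∀ f : ℕ → D, Monotone f →
        ∃ w : D, IsLUB (Set.range f) w ∧ IsLUB (Set.range fun n => (f n : S)) (w : S) := by
      intro f hf
      have hmono : Monotone fun n => (f n : S) := fun a b hab => Subtype.coe_le_coe.mpr (hf hab)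
      obtain ⟨w, hw⟩ := CuSemigroup.exists_sup (fun n => (f n : S)) hmono
      have hwD : w ∈ cuDerivedSet (T : Set S) :=
        derivedSet_supClosed (T : Set S) _ hmono (fun n => (f n).2) w hw
      exact ⟨⟨w, hwD⟩, lub_lift f ⟨w, hwD⟩ hw, hw⟩
    -- D-lubs of monotone sequences are S-lubs
    have lub_coe : ∀ f : ℕ → D, Monotone f → ∀ z : D, IsLUB (Set.range f) z →
        IsLUB (Set.range fun n => (f n : S)) (z : S) := by
      intro f hf z hz
      obtain ⟨w, hw, hw'⟩ := lub_exists f hf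
      rwa [hz.unique hw]
    -- way below in S implies way below in D
    have wb_coe_to_sub : ∀ x y : D, WayBelow (x : S) (y : S) → WayBelow x y := by
      intro x y hxy f hf z hz hyz
      obtain ⟨n, hn⟩ := hxy (fun n => (f n : S))
        (fun a b hab => Subtype.coe_le_coe.mpr (hf hab)) (z : S)
        (lub_coe f hf z hz) (Subtype.coe_le_coe.mpr hyz)
      exact ⟨n, Subtype.coe_le_coe.mp hn⟩
    -- way below in D implies way below in S
    have wb_sub_to_coe : ∀ x y : D, WayBelow x y → WayBelow (x : S) (y : S) := by
      intro x y hxy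
      obtain ⟨t, htT, htwb, htlub⟩ := y.2
      set t' : ℕ → D := fun n => ⟨t n, h (htT n)⟩ with ht'
      have ht'mono : Monotone t' := fun a b hab =>
        Subtype.coe_le_coe.mpr ((monotone_nat_of_le_succ fun n => wayBelow_le (htwb n)) hab)
      have ht'lub : IsLUB (Set.range t') y := lub_lift t' y htlub
      obtain ⟨n, hn⟩ := hxy t' ht'mono y ht'lub le_rfl
      exact le_wayBelow_le (Subtype.coe_le_coe.mpr hn) (htwb n) (htlub.1 ⟨n + 1, rfl⟩)
    refine ⟨⟨?_, ?_, ?_, ?_, ?_, ?_⟩, lub_coe, wb_sub_to_coe⟩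
    · -- zero_le
      intro x
      exact Subtype.coe_le_coe.mp (by simpa using CuSemigroup.zero_le (x : S))
    · -- add_le_add_left
      intro x y hxy zz
      exact Subtype.coe_le_coe.mp
        (by simpa using CuSemigroup.add_le_add_left (x : S) (y : S) hxy (zz : S))
    · -- exists_sup
      intro f hf
      obtain ⟨w, hw, _⟩ := lub_exists f hf
      exact ⟨w, hw⟩
    · -- exists_wb_seq
      intro x
      obtain ⟨t, htT, htwb, htlub⟩ := x.2
      refine ⟨fun n => ⟨t n, h (htT n)⟩, fun n => wb_coe_to_sub _ _ (htwb n), ?_⟩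
      exact lub_lift (fun n => ⟨t n, h (htT n)⟩) x htlub
    · -- wb_add
      intro x' x y' y hx hy
      refine wb_coe_to_sub _ _ ?_
      have := CuSemigroup.wb_add (x' : S) (x : S) (y' : S) (y : S)
        (wb_sub_to_coe _ _ hx) (wb_sub_to_coe _ _ hy)
      simpa using this
    · -- sup_add
      intro f g hf hg a b ha hb
      have hfS := lub_coe f hf a ha
      have hgS := lub_coe g hg b hb
      have hsum := CuSemigroup.sup_add (fun n => (f n : S)) (fun n => (g n : S))
        (fun i j hij => Subtype.coe_le_coe.mpr (hf hij))
        (fun i j hij => Subtype.coe_le_coe.mpr (hg hij)) _ _ hfS hgS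
      refine lub_lift (fun n => f n + g n) (a + b) ?_
      simpa using hsum
end

section
/- Let S be a Cu-semigroup. Then a submonoid T ⊆ S is a sub-Cu-semigroup if and only if T is closed under suprema of increasing sequences and for every x' ∈ S and x ∈ T with x' ≪ x there exists y ∈ T with x' ≪ y ≪ x. -/
/-!
If `T` is closed under suprema of increasing sequences, suprema in `T` are suprema in `S`, so
`a ≪ b` in `S` implies `a ≪ b` in `T`. Interpolation turns a `≪`-increasing sequence in `S` with
supremum `x ∈ T` into one inside `T` with the same supremum; this is axiom O2 for `T`, and it
shows that `a ≪ b` in `T` implies `a ≪ b` in `S`, since `a` then lies below a term of such a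
sequence for `b`. The other axioms pass from `S` to `T`. Conversely, in a sub-Cu-semigroup the
interpolants of `x' ≪ x` are found along a `≪`-increasing sequence in `T` with supremum `x`.
-/

open Set

section WayBelow

variable {S : Type*} [PartialOrder S]

lemma WayBelow.le {x y : S} (h : WayBelow x y) : x ≤ y := by
  obtain ⟨n, hn⟩ := h (fun _ => y) monotone_const y (by simp) le_rfl
  exact hn

lemma WayBelow.mono {x x' y y' : S} (hx : x ≤ x') (h : WayBelow x' y) (hy : y ≤ y') :
    WayBelow x y' := fun f hf z hz hyz => by
  obtain ⟨n, hn⟩ := h f hf z hz (hy.trans hyz)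
  exact ⟨n, hx.trans hn⟩

lemma monotone_of_wayBelow_succ {f : ℕ → S} (hf : ∀ n, WayBelow (f n) (f (n + 1))) :
    Monotone f :=
  monotone_nat_of_le_succ fun n => (hf n).le

lemma wayBelow_of_isLUB_of_wayBelow_succ {f : ℕ → S} {x : S}
    (hf : ∀ n, WayBelow (f n) (f (n + 1))) (hx : IsLUB (range f) x) (n : ℕ) :
    WayBelow (f n) x :=
  (hf n).mono le_rfl (hx.1 ⟨n + 1, rfl⟩)

end WayBelow

lemma isLUB_range_mk {S ι : Type*} [PartialOrder S] {T : Set S} {f : ι → T} {z : S}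
    (hz : IsLUB (range fun i => (f i : S)) z) (hzT : z ∈ T) :
    IsLUB (range f) (⟨z, hzT⟩ : T) := by
  refine ⟨?_, fun u hu => hz.2 ?_⟩
  · rintro _ ⟨i, rfl⟩
    exact hz.1 ⟨i, rfl⟩
  · rintro _ ⟨i, rfl⟩
    exact hu ⟨i, rfl⟩

def InterpolatesWayBelow {S : Type*} [PartialOrder S] (T : Set S) : Prop :=
  ∀ x' : S, ∀ x ∈ T, WayBelow x' x → ∃ y ∈ T, WayBelow x' y ∧ WayBelow y x

namespace InterpolatesWayBelow

variable {S : Type*} [PartialOrder S] {T : Set S} {x : S} {f : ℕ → S}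

lemma exists_wayBelow_ge (hint : InterpolatesWayBelow T) (hx : x ∈ T)
    (hf : ∀ n, WayBelow (f n) (f (n + 1))) (hfx : IsLUB (range f) x) {y : S}
    (hy : WayBelow y x) (n : ℕ) :
    ∃ y' ∈ T, WayBelow y y' ∧ WayBelow y' x ∧ f n ≤ y' := by
  have hf_mono := monotone_of_wayBelow_succ hf
  obtain ⟨m, hym⟩ := hy f hf_mono x hfx le_rfl
  obtain ⟨y', hy'T, hfy', hy'x⟩ :=
    hint _ x hx (wayBelow_of_isLUB_of_wayBelow_succ hf hfx (max (m + 1) n))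
  refine ⟨y', hy'T, ?_, hy'x, (hf_mono (le_max_right _ _)).trans hfy'.le⟩
  exact (hf m).mono hym ((hf_mono (le_max_left _ _)).trans hfy'.le)

lemma mem_cuDerivedSet_of_isLUB (hint : InterpolatesWayBelow T) (hx : x ∈ T)
    (hf : ∀ n, WayBelow (f n) (f (n + 1))) (hfx : IsLUB (range f) x) :
    x ∈ cuDerivedSet T := by
  have step : ∀ (y : {y // WayBelow y x}) (n : ℕ),
      ∃ y' ∈ T, WayBelow y.1 y' ∧ WayBelow y' x ∧ f n ≤ y' :=
    fun y n => hint.exists_wayBelow_ge hx hf hfx y.2 n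
  choose next hnext_mem hnext_wb hnext_wbx hnext_ge using step
  obtain ⟨y₀, hy₀T, -, hy₀x⟩ := hint (f 0) x hx (wayBelow_of_isLUB_of_wayBelow_succ hf hfx 0)
  -- `g (n + 1) = next (g n) n` lies above `f n`, so `g` has the same upper bounds as `f`.
  let g : ℕ → {y // WayBelow y x} := fun n =>
    Nat.rec ⟨y₀, hy₀x⟩ (fun n y => ⟨next y n, hnext_wbx y n⟩) n
  have hg_mem : ∀ n, (g n).1 ∈ T := by
    rintro (_ | n)
    exacts [hy₀T, hnext_mem (g n) n]
  refine ⟨fun n => (g n).1, hg_mem, fun n => hnext_wb (g n) n, ?_, fun u hu => hfx.2 ?_⟩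
  · rintro _ ⟨n, rfl⟩
    exact (g n).2.le
  · rintro _ ⟨n, rfl⟩
    exact (hnext_ge (g n) n).trans (hu ⟨n + 1, rfl⟩)

end InterpolatesWayBelow

lemma InterpolatesWayBelow.mem_cuDerivedSet {S : Type*} [AddCommMonoid S] [PartialOrder S]
    [CuSemigroup S] {T : Set S} (hint : InterpolatesWayBelow T) {x : S} (hx : x ∈ T) :
    x ∈ cuDerivedSet T := by
  obtain ⟨f, hf, hfx⟩ := CuSemigroup.exists_wb_seq x
  exact hint.mem_cuDerivedSet_of_isLUB hx hf hfx

namespace SupClosedSet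

variable {S : Type*} [AddCommMonoid S] [PartialOrder S] [CuSemigroup S] {T : Set S}

lemma exists_isLUB_coe (hsc : SupClosedSet T) {f : ℕ → T} (hf : Monotone f) :
    ∃ z : T, IsLUB (range f) z ∧ IsLUB (range fun n => (f n : S)) z := by
  obtain ⟨z, hz⟩ := CuSemigroup.exists_sup _ ((Subtype.mono_coe _).comp hf)
  have hzT : z ∈ T := hsc _ ((Subtype.mono_coe _).comp hf) (fun n => (f n).2) z hz
  exact ⟨⟨z, hzT⟩, isLUB_range_mk hz hzT, hz⟩

lemma isLUB_coe (hsc : SupClosedSet T) {f : ℕ → T} (hf : Monotone f) {z : T}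
    (hz : IsLUB (range f) z) : IsLUB (range fun n => (f n : S)) z := by
  obtain ⟨w, hw, hwS⟩ := hsc.exists_isLUB_coe hf
  rwa [hz.unique hw]

lemma wayBelow_of_coe (hsc : SupClosedSet T) {a b : T} (h : WayBelow (a : S) b) :
    WayBelow a b := fun _ hf z hz hbz =>
  h _ ((Subtype.mono_coe _).comp hf) z (hsc.isLUB_coe hf hz) hbz

end SupClosedSet

lemma InterpolatesWayBelow.coe_wayBelow {S : Type*} [AddCommMonoid S] [PartialOrder S]
    [CuSemigroup S] {T : Set S} (hint : InterpolatesWayBelow T) {a b : T} (h : WayBelow a b) :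
    WayBelow (a : S) b := by
  obtain ⟨g, hgT, hg, hgb⟩ := hint.mem_cuDerivedSet b.2
  let G : ℕ → T := fun n => ⟨g n, hgT n⟩
  have hG_mono : Monotone G := fun _ _ hmn => monotone_of_wayBelow_succ hg hmn
  obtain ⟨n, hn⟩ := h G hG_mono b (isLUB_range_mk hgb b.2) le_rfl
  exact (hg n).mono hn (hgb.1 ⟨n + 1, rfl⟩)

lemma cuSemigroup_of_supClosedSet_of_interpolatesWayBelow {S : Type*} [AddCommMonoid S]
    [PartialOrder S] [CuSemigroup S] {T : AddSubmonoid S} (hsc : SupClosedSet (T : Set S))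
    (hint : InterpolatesWayBelow (T : Set S)) : CuSemigroup T where
  zero_le x := CuSemigroup.zero_le (x : S)
  add_le_add_left x y h z := CuSemigroup.add_le_add_left (x : S) y h z
  exists_sup f hf := (hsc.exists_isLUB_coe hf).imp fun _ => And.left
  exists_wb_seq x := by
    obtain ⟨g, hgT, hg, hgx⟩ := hint.mem_cuDerivedSet x.2
    exact ⟨fun n => ⟨g n, hgT n⟩, fun n => hsc.wayBelow_of_coe (hg n), isLUB_range_mk hgx x.2⟩
  wb_add x' x y' y hx hy := hsc.wayBelow_of_coe
    (CuSemigroup.wb_add _ _ _ _ (hint.coe_wayBelow hx) (hint.coe_wayBelow hy))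
  sup_add f g hf hg a b ha hb := isLUB_range_mk
    (CuSemigroup.sup_add _ _ ((Subtype.mono_coe _).comp hf) ((Subtype.mono_coe _).comp hg) _ _
      (hsc.isLUB_coe hf ha) (hsc.isLUB_coe hg hb)) (a + b).2

namespace IsSubCu

variable {S : Type*} [AddCommMonoid S] [PartialOrder S] {T : AddSubmonoid S}

lemma supClosedSet (hT : IsSubCu T) : SupClosedSet (T : Set S) := by
  obtain ⟨hCu, hsup, -⟩ := hT
  intro f hf hfT z hz
  let F : ℕ → T := fun n => ⟨f n, hfT n⟩
  obtain ⟨w, hw⟩ := hCu.exists_sup F hf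
  rw [hz.unique (hsup F hf w hw)]
  exact w.2

lemma interpolatesWayBelow (hT : IsSubCu T) : InterpolatesWayBelow (T : Set S) := by
  obtain ⟨hCu, hsup, hwb⟩ := hT
  intro x' x hx hx'x
  obtain ⟨g, hg, hgx⟩ := hCu.exists_wb_seq ⟨x, hx⟩
  have hg_mono := monotone_of_wayBelow_succ hg
  obtain ⟨n, hn⟩ := hx'x _ ((Subtype.mono_coe _).comp hg_mono) x (hsup g hg_mono _ hgx) le_rfl
  exact ⟨g (n + 1), (g (n + 1)).2, (hwb _ _ (hg n)).mono hn le_rfl,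
    hwb _ _ (wayBelow_of_isLUB_of_wayBelow_succ hg hgx (n + 1))⟩

end IsSubCu

theorem isSubCu_iff_supClosed_interpolation {S : Type*} [AddCommMonoid S] [PartialOrder S]
    [CuSemigroup S] (T : AddSubmonoid S) :
    IsSubCu T ↔
      (SupClosedSet (T : Set S) ∧
        ∀ x' : S, ∀ x ∈ T, WayBelow x' x → ∃ y ∈ T, WayBelow x' y ∧ WayBelow y x) := by
  refine ⟨fun hT => ⟨hT.supClosedSet, hT.interpolatesWayBelow⟩, fun ⟨hsc, hint⟩ => ?_⟩
  exact ⟨cuSemigroup_of_supClosedSet_of_interpolatesWayBelow hsc hint,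
    fun _ hf _ hz => hsc.isLUB_coe hf hz, fun _ _ => InterpolatesWayBelow.coe_wayBelow hint⟩
end
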